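/- arXiv:2511.01672 — 4 statements merged into one kernel-verified Lean document; each statement's English description precedes it below -/
import Mathlib

section
/- Suppose P : ℝ → ℝ^{n×n} satisfies the backward Lyapunov ODE on [0,T]. Then for all τ₀, τ₁ with 0 ≤ τ₀ ≤ τ₁ ≤ T, writing Δτ := τ₁ − τ₀, one has the identity P(τ₀) − P(τ₁) = ∫₀^{Δτ} e^{A_ζᵀ·s}·CᵀC·e^{A_ζ·s} ds + e^{A_ζᵀ·Δτ}·P(τ₁)·e^{A_ζ·Δτ} − P(τ₁). -/
/-!
Conjugating by the flow of `A_ζ = A + ζ I` turns the Lyapunov ODE into a pure quadrature: with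
`g u = e^{u A_ζᵀ} P(τ₀ + u) e^{u A_ζ}`, the terms `A_ζᵀ P + P A_ζ` produced by differentiating the
exponentials cancel the linear part of `-P'`, so `g' u = -e^{u A_ζᵀ} CᵀC e^{u A_ζ}`. The identity is
the fundamental theorem of calculus for `g` on `[0, τ₁ - τ₀]`.
-/

open Matrix

noncomputable section

attribute [local instance] Matrix.normedAddCommGroup Matrix.normedSpace

/-- Spectral norm (ℓ²-operator norm) of a square real matrix. -/
noncomputable def sNorm {ι : Type*} [Fintype ι] [DecidableEq ι] (M : Matrix ι ι ℝ) : ℝ :=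
  ‖Matrix.toEuclideanCLM (𝕜 := ℝ) M‖

/-- `S ≺ 0`: the quadratic form of `S` is negative on every nonzero vector. -/
def NegDef {ι : Type*} [Fintype ι] (S : Matrix ι ι ℝ) : Prop :=
  ∀ x : ι → ℝ, x ≠ 0 → x ⬝ᵥ S.mulVec x < 0

theorem hasDerivAt_exp_smul_mul_mul_exp_smul {𝔸 : Type*} [NormedRing 𝔸] [NormedAlgebra ℝ 𝔸]
    [CompleteSpace 𝔸] (L R : 𝔸) {Q : ℝ → 𝔸} {Q' : 𝔸} {s : ℝ} (hQ : HasDerivAt Q Q' s) :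
    HasDerivAt (fun u : ℝ => NormedSpace.exp (u • L) * Q u * NormedSpace.exp (u • R))
      (NormedSpace.exp (s • L) * (L * Q s + Q' + Q s * R) * NormedSpace.exp (s • R)) s := by
  refine (((hasDerivAt_exp_smul_const L s).mul hQ).mul
    (hasDerivAt_exp_smul_const' R s)).congr_deriv ?_
  simp only [Pi.mul_apply, mul_add, add_mul, mul_assoc]

namespace Matrix

variable {n p : Type*} [Fintype n] [DecidableEq n] [Fintype p]

/-- The entrywise sup norm carries no `NormedRing` structure, but derivatives only depend on the
topology, so the Banach-algebra statement is transported through the `ℓ∞`-operator norm. -/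
theorem hasDerivAt_exp_smul_mul_mul_exp_smul (L R : Matrix n n ℝ) {Q : ℝ → Matrix n n ℝ}
    {Q' : Matrix n n ℝ} {s : ℝ} (hQ : HasDerivAt Q Q' s) :
    HasDerivAt (fun u : ℝ => NormedSpace.exp (u • L) * Q u * NormedSpace.exp (u • R))
      (NormedSpace.exp (s • L) * (L * Q s + Q' + Q s * R) * NormedSpace.exp (s • R)) s := by
  let := Matrix.linftyOpNormedRing (n := n) (α := ℝ)
  let := Matrix.linftyOpNormedAlgebra (n := n) (R := ℝ) (α := ℝ)
  let : NormedAddCommGroup (Matrix n n ℝ) := Matrix.linftyOpNormedAddCommGroup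
  have : CompleteSpace (Matrix n n ℝ) := FiniteDimensional.complete ℝ _
  exact _root_.hasDerivAt_exp_smul_mul_mul_exp_smul L R hQ

theorem continuous_exp_smul_mul_mul_exp_smul (L M R : Matrix n n ℝ) :
    Continuous fun u : ℝ => NormedSpace.exp (u • L) * M * NormedSpace.exp (u • R) :=
  continuous_iff_continuousAt.mpr fun s =>
    (hasDerivAt_exp_smul_mul_mul_exp_smul L R (hasDerivAt_const s M)).continuousAt

theorem hasDerivAt_exp_conj_of_lyapunov (A : Matrix n n ℝ) (C : Matrix p n ℝ) (ζ : ℝ)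
    {P : ℝ → Matrix n n ℝ} {τ s : ℝ}
    (hP : HasDerivAt P
      (-(Aᵀ * P (τ + s) + P (τ + s) * A + Cᵀ * C + (2 * ζ) • P (τ + s))) (τ + s)) :
    HasDerivAt
      (fun u : ℝ =>
        NormedSpace.exp (u • (A + ζ • 1)ᵀ) * P (τ + u) * NormedSpace.exp (u • (A + ζ • 1)))
      (-(NormedSpace.exp (s • (A + ζ • 1)ᵀ) * (Cᵀ * C) * NormedSpace.exp (s • (A + ζ • 1)))) s := by
  have hcancel : (A + ζ • 1)ᵀ * P (τ + s)
      + -(Aᵀ * P (τ + s) + P (τ + s) * A + Cᵀ * C + (2 * ζ) • P (τ + s))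
      + P (τ + s) * (A + ζ • 1) = -(Cᵀ * C) := by
    rw [transpose_add, transpose_smul, transpose_one]
    simp only [add_mul, mul_add, smul_mul_assoc, mul_smul_comm, one_mul, mul_one]
    module
  convert hasDerivAt_exp_smul_mul_mul_exp_smul _ _ (hP.comp_const_add τ s) using 1
  rw [hcancel, mul_neg, neg_mul]

end Matrix

theorem stmt1_general {n p : ℕ} (T ζ : ℝ)
    (A : Matrix (Fin n) (Fin n) ℝ) (C : Matrix (Fin p) (Fin n) ℝ)
    (P : ℝ → Matrix (Fin n) (Fin n) ℝ)
    (hP : ∀ t ∈ Set.Icc (0:ℝ) T,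
        HasDerivAt P (-(Aᵀ * P t + P t * A + Cᵀ * C + (2 * ζ) • P t)) t)
    (τ₀ τ₁ : ℝ) (h0 : 0 ≤ τ₀) (h01 : τ₀ ≤ τ₁) (h1 : τ₁ ≤ T) :
    P τ₀ - P τ₁ =
      (∫ s in (0:ℝ)..(τ₁ - τ₀),
        NormedSpace.exp (s • (A + ζ • (1 : Matrix (Fin n) (Fin n) ℝ))ᵀ) * (Cᵀ * C) *
          NormedSpace.exp (s • (A + ζ • (1 : Matrix (Fin n) (Fin n) ℝ))))
      + NormedSpace.exp ((τ₁ - τ₀) • (A + ζ • (1 : Matrix (Fin n) (Fin n) ℝ))ᵀ) * P τ₁ *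
          NormedSpace.exp ((τ₁ - τ₀) • (A + ζ • (1 : Matrix (Fin n) (Fin n) ℝ)))
      - P τ₁ := by
  set B : Matrix (Fin n) (Fin n) ℝ := A + ζ • 1
  have hconj : ∀ s ∈ Set.uIcc 0 (τ₁ - τ₀),
      HasDerivAt (fun u : ℝ => NormedSpace.exp (u • Bᵀ) * P (τ₀ + u) * NormedSpace.exp (u • B))
        (-(NormedSpace.exp (s • Bᵀ) * (Cᵀ * C) * NormedSpace.exp (s • B))) s := by
    intro s hs
    rw [Set.uIcc_of_le (sub_nonneg.mpr h01)] at hs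
    exact hasDerivAt_exp_conj_of_lyapunov A C ζ (hP _ ⟨by linarith [hs.1], by linarith [hs.2]⟩)
  have hFTC := intervalIntegral.integral_eq_sub_of_hasDerivAt hconj
    ((continuous_exp_smul_mul_mul_exp_smul Bᵀ (Cᵀ * C) B).neg.intervalIntegrable _ _)
  simp only [intervalIntegral.integral_neg, add_sub_cancel, zero_smul, NormedSpace.exp_zero,
    add_zero, one_mul, mul_one] at hFTC
  rw [neg_eq_iff_eq_neg.mp hFTC]
  abel

/-- The integral identity for solutions of the backward Lyapunov ODE (proof of Lemma 2). -/
theorem stmt1 {n p : ℕ} (hn : 1 ≤ n) (hp : 1 ≤ p) (T ζ : ℝ) (hT : 0 < T) (hζ : 0 < ζ)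
    (A : Matrix (Fin n) (Fin n) ℝ) (C : Matrix (Fin p) (Fin n) ℝ)
    (X : Matrix (Fin n) (Fin n) ℝ) (hX : X.PosDef)
    (P : ℝ → Matrix (Fin n) (Fin n) ℝ)
    (hP : ∀ t ∈ Set.Icc (0:ℝ) T,
        HasDerivAt P (-(Aᵀ * P t + P t * A + Cᵀ * C + (2 * ζ) • P t)) t)
    (hPT : P T = X)
    (τ₀ τ₁ : ℝ) (h0 : 0 ≤ τ₀) (h01 : τ₀ ≤ τ₁) (h1 : τ₁ ≤ T) :
    P τ₀ - P τ₁ =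
      (∫ s in (0:ℝ)..(τ₁ - τ₀),
        NormedSpace.exp (s • (A + ζ • (1 : Matrix (Fin n) (Fin n) ℝ))ᵀ) * (Cᵀ * C) *
          NormedSpace.exp (s • (A + ζ • (1 : Matrix (Fin n) (Fin n) ℝ))))
      + NormedSpace.exp ((τ₁ - τ₀) • (A + ζ • (1 : Matrix (Fin n) (Fin n) ℝ))ᵀ) * P τ₁ *
          NormedSpace.exp ((τ₁ - τ₀) • (A + ζ • (1 : Matrix (Fin n) (Fin n) ℝ)))
      - P τ₁ :=
  stmt1_general T ζ A C P hP τ₀ τ₁ h0 h01 h1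
end
end

section
/- Suppose P : ℝ → ℝ^{n×n} satisfies the backward Lyapunov ODE on [0,T]. Let ε > 0 and let μ > 0 be such that ϑ(μ) < ε. Then for all τ₀, τ₁ with 0 ≤ τ₀ ≤ τ₁ ≤ T and τ₁ − τ₀ < μ, it holds that ‖P(τ₁) − P(τ₀)‖ < ε. -/
open Matrix

noncomputable section

attribute [local instance] Matrix.normedAddCommGroup Matrix.normedSpace

/-- The modulus-of-continuity bound ϑ(μ) from Lemma 2 of the paper. -/
noncomputable def vartheta {n p : ℕ} (T ζ : ℝ) (A : Matrix (Fin n) (Fin n) ℝ)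
    (C : Matrix (Fin p) (Fin n) ℝ) (X : Matrix (Fin n) (Fin n) ℝ) (μ : ℝ) : ℝ :=
  let a := sNorm (A + ζ • (1 : Matrix (Fin n) (Fin n) ℝ))
  let PP := (sNorm X + T * sNorm (Cᵀ * C)) * Real.exp (2 * T * a)
  μ * Real.exp (2 * a * μ) * sNorm (Cᵀ * C) +
    (2 * (Real.exp (a * μ) - 1) + (Real.exp (a * μ) - 1) ^ 2) * PP

/-!
Rewriting the equation with `A_ζ = A + ζ I` as `-P' = A_ζᵀ P + P A_ζ + CᵀC`, the derivative obeys
`‖P'‖ ≤ 2‖A_ζ‖ ‖P‖ + ‖CᵀC‖`. Grönwall's inequality, run backwards from `P T = X`, bounds `‖P t‖`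
by `𝐏` on `[0, T]`, so `P` is Lipschitz there with constant `2‖A_ζ‖ 𝐏 + ‖CᵀC‖`. This constant
times `μ` is at most `ϑ(μ)`, since with `a = ‖A_ζ‖`,
`2(e^{aμ} - 1) + (e^{aμ} - 1)² = e^{2aμ} - 1 ≥ 2aμ`.
-/

open Set

lemma Real.exp_sub_one_le_mul_exp (x : ℝ) : Real.exp x - 1 ≤ x * Real.exp x := by
  have h := Real.add_one_le_exp (-x)
  rw [Real.exp_neg] at h
  have hx := Real.exp_pos x
  field_simp at h
  nlinarith

lemma gronwallBound_le_add_mul_mul_exp {δ K ε : ℝ} (hK : 0 ≤ K) (hε : 0 ≤ ε) (x : ℝ) :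
    gronwallBound δ K ε x ≤ (δ + x * ε) * Real.exp (K * x) := by
  rcases hK.eq_or_lt with rfl | hK
  · simp [gronwallBound_K0, mul_comm]
  · rw [gronwallBound_of_K_ne_0 hK.ne']
    have key : ε / K * (Real.exp (K * x) - 1) ≤ ε / K * (K * x * Real.exp (K * x)) := by
      gcongr
      exact Real.exp_sub_one_le_mul_exp _
    calc _ ≤ δ * Real.exp (K * x) + ε / K * (K * x * Real.exp (K * x)) := by linarith
      _ = _ := by field_simp

theorem norm_le_gronwallBound_of_norm_deriv_le_backward {E : Type*}
    [NormedAddCommGroup E] [NormedSpace ℝ E] {f f' : ℝ → E} {δ K ε a b : ℝ}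
    (hf : ∀ t ∈ Icc a b, HasDerivAt f (f' t) t) (hb : ‖f b‖ ≤ δ)
    (bound : ∀ t ∈ Icc a b, ‖f' t‖ ≤ K * ‖f t‖ + ε) :
    ∀ t ∈ Icc a b, ‖f t‖ ≤ gronwallBound δ K ε (b - t) := by
  have neg_mem {s : ℝ} (hs : s ∈ Icc (-b) (-a)) : -s ∈ Icc a b :=
    ⟨by linarith [hs.2], by linarith [hs.1]⟩
  have hg : ∀ s ∈ Icc (-b) (-a), HasDerivAt (fun s => f (-s)) (-f' (-s)) s := fun s hs => by
    simpa [Function.comp_def] using (hf (-s) (neg_mem hs)).scomp s (hasDerivAt_neg s)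
  intro t ht
  have := norm_le_gronwallBound_of_norm_deriv_right_le (f' := fun s => -f' (-s))
    (fun s hs => (hg s hs).continuousAt.continuousWithinAt)
    (fun s hs => (hg s (Ico_subset_Icc_self hs)).hasDerivWithinAt) (by simpa using hb)
    (fun s hs => by simpa [norm_neg] using bound (-s) (neg_mem (Ico_subset_Icc_self hs)))
    (-t) ⟨by linarith [ht.2], by linarith [ht.1]⟩
  simpa [sub_eq_neg_add, add_comm] using this

lemma norm_mul_add_mul_add_le {R : Type*} [NonUnitalSeminormedRing R] (a b x c : R) :
    ‖a * x + x * b + c‖ ≤ (‖a‖ + ‖b‖) * ‖x‖ + ‖c‖ :=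
  calc ‖a * x + x * b + c‖ ≤ ‖a * x‖ + ‖x * b‖ + ‖c‖ := norm_add₃_le
    _ ≤ ‖a‖ * ‖x‖ + ‖x‖ * ‖b‖ + ‖c‖ := by gcongr <;> exact norm_mul_le _ _
    _ = (‖a‖ + ‖b‖) * ‖x‖ + ‖c‖ := by ring

section LyapunovODE

variable {R : Type*} [NonUnitalNormedRing R] [NormedSpace ℝ R] {Q : ℝ → R} {A B C : R} {a b : ℝ}

theorem norm_le_of_hasDerivAt_lyapunov
    (hQ : ∀ t ∈ Icc a b, HasDerivAt Q (-(A * Q t + Q t * B + C)) t) :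
    ∀ t ∈ Icc a b, ‖Q t‖ ≤ (‖Q b‖ + (b - a) * ‖C‖) * Real.exp ((‖A‖ + ‖B‖) * (b - a)) := by
  intro t ht
  have hK : 0 ≤ ‖A‖ + ‖B‖ := by positivity
  calc ‖Q t‖ ≤ gronwallBound ‖Q b‖ (‖A‖ + ‖B‖) ‖C‖ (b - t) :=
        norm_le_gronwallBound_of_norm_deriv_le_backward hQ le_rfl
          (fun s _ => by simpa only [norm_neg] using norm_mul_add_mul_add_le A B (Q s) C) t ht
    _ ≤ gronwallBound ‖Q b‖ (‖A‖ + ‖B‖) ‖C‖ (b - a) :=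
        gronwallBound_mono (norm_nonneg _) (norm_nonneg _) hK (by linarith [ht.1])
    _ ≤ _ := gronwallBound_le_add_mul_mul_exp hK (norm_nonneg _) _

theorem norm_sub_le_of_hasDerivAt_lyapunov
    (hQ : ∀ t ∈ Icc a b, HasDerivAt Q (-(A * Q t + Q t * B + C)) t) {M : ℝ}
    (hM : ∀ t ∈ Icc a b, ‖Q t‖ ≤ M) {s t : ℝ} (hs : s ∈ Icc a b) (ht : t ∈ Icc a b) :
    ‖Q t - Q s‖ ≤ ((‖A‖ + ‖B‖) * M + ‖C‖) * ‖t - s‖ :=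
  (convex_Icc a b).norm_image_sub_le_of_norm_hasDerivWithin_le
    (fun x hx => (hQ x hx).hasDerivWithinAt)
    (fun x hx => by
      rw [norm_neg]
      refine (norm_mul_add_mul_add_le A B (Q x) C).trans ?_
      gcongr
      exact hM x hx) hs ht

end LyapunovODE

lemma sNorm_nonneg {ι : Type*} [Fintype ι] [DecidableEq ι] (M : Matrix ι ι ℝ) : 0 ≤ sNorm M :=
  norm_nonneg _

lemma sNorm_transpose {ι : Type*} [Fintype ι] [DecidableEq ι] (M : Matrix ι ι ℝ) :
    sNorm Mᵀ = sNorm M := by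
  have h := l2_opNorm_conjTranspose (𝕜 := ℝ) M
  rw [conjTranspose_eq_transpose_of_trivial] at h
  exact h

lemma hasDerivAt_toEuclideanCLM {ι : Type*} [Fintype ι] [DecidableEq ι] {P : ℝ → Matrix ι ι ℝ}
    {P' : Matrix ι ι ℝ} {t : ℝ} (h : HasDerivAt P P' t) :
    HasDerivAt (fun t => toEuclideanCLM (𝕜 := ℝ) (P t)) (toEuclideanCLM (𝕜 := ℝ) P') t :=
  (toEuclideanCLM (n := ι) (𝕜 := ℝ)).toAlgEquiv.toLinearMap.toContinuousLinearMap.hasFDerivAt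
    |>.comp_hasDerivAt t h

lemma lyapunov_add_two_smul_eq {ι R : Type*} [Fintype ι] [DecidableEq ι] [CommRing R]
    (A P D : Matrix ι ι R) (ζ : R) :
    Aᵀ * P + P * A + D + (2 * ζ) • P = (A + ζ • 1)ᵀ * P + P * (A + ζ • 1) + D := by
  simp only [transpose_add, transpose_smul, transpose_one, add_mul, mul_add, Matrix.smul_mul,
    Matrix.mul_smul, Matrix.one_mul, Matrix.mul_one, two_mul, add_smul]
  abel

/-- The paper's `𝐏`. -/
def lyapunovBound {n p : ℕ} (T ζ : ℝ) (A : Matrix (Fin n) (Fin n) ℝ)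
    (C : Matrix (Fin p) (Fin n) ℝ) (X : Matrix (Fin n) (Fin n) ℝ) : ℝ :=
  (sNorm X + T * sNorm (Cᵀ * C)) * Real.exp (2 * T * sNorm (A + ζ • 1))

lemma lyapunovBound_nonneg {n p : ℕ} {T : ℝ} (ζ : ℝ) (A : Matrix (Fin n) (Fin n) ℝ)
    (C : Matrix (Fin p) (Fin n) ℝ) (X : Matrix (Fin n) (Fin n) ℝ) (hT : 0 ≤ T) :
    0 ≤ lyapunovBound T ζ A C X :=
  mul_nonneg (add_nonneg (sNorm_nonneg X) (mul_nonneg hT (sNorm_nonneg _))) (Real.exp_pos _).le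

lemma mul_le_vartheta {n p : ℕ} {T ζ μ : ℝ} (A : Matrix (Fin n) (Fin n) ℝ)
    (C : Matrix (Fin p) (Fin n) ℝ) (X : Matrix (Fin n) (Fin n) ℝ) (hT : 0 ≤ T) (hμ : 0 ≤ μ) :
    (2 * sNorm (A + ζ • 1) * lyapunovBound T ζ A C X + sNorm (Cᵀ * C)) * μ ≤
      vartheta T ζ A C X μ := by
  set a := sNorm (A + ζ • (1 : Matrix (Fin n) (Fin n) ℝ))
  set c := sNorm (Cᵀ * C)
  set M := lyapunovBound T ζ A C X
  change _ ≤ μ * Real.exp (2 * a * μ) * c +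
    (2 * (Real.exp (a * μ) - 1) + (Real.exp (a * μ) - 1) ^ 2) * M
  have hexp : 2 * (Real.exp (a * μ) - 1) + (Real.exp (a * μ) - 1) ^ 2 =
      Real.exp (2 * a * μ) - 1 := by
    rw [mul_assoc, two_mul (a * μ), Real.exp_add]; ring
  have hlin : 2 * a * μ ≤ Real.exp (2 * a * μ) - 1 := by
    linarith [Real.add_one_le_exp (2 * a * μ)]
  have hone : 1 ≤ Real.exp (2 * a * μ) :=
    Real.one_le_exp (mul_nonneg (mul_nonneg zero_le_two (sNorm_nonneg _)) hμ)
  rw [hexp]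
  nlinarith [mul_le_mul_of_nonneg_right hlin (lyapunovBound_nonneg ζ A C X hT),
    mul_le_mul_of_nonneg_left hone (mul_nonneg hμ (sNorm_nonneg (Cᵀ * C)))]

theorem stmt2_general {n p : ℕ} (T ζ : ℝ)
    (A : Matrix (Fin n) (Fin n) ℝ) (C : Matrix (Fin p) (Fin n) ℝ)
    (X : Matrix (Fin n) (Fin n) ℝ)
    (P : ℝ → Matrix (Fin n) (Fin n) ℝ)
    (hP : ∀ t ∈ Set.Icc (0:ℝ) T,
        HasDerivAt P (-(Aᵀ * P t + P t * A + Cᵀ * C + (2 * ζ) • P t)) t)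
    (hPT : P T = X)
    (ε μ : ℝ) (hϑ : vartheta T ζ A C X μ < ε) :
    ∀ τ₀ τ₁ : ℝ, 0 ≤ τ₀ → τ₀ ≤ τ₁ → τ₁ ≤ T → τ₁ - τ₀ < μ →
      sNorm (P τ₁ - P τ₀) < ε := by
  intro τ₀ τ₁ h0 h01 h1T hτμ
  set Aζ := A + ζ • (1 : Matrix (Fin n) (Fin n) ℝ)
  -- `toEuclideanCLM` turns `sNorm` into the norm of a normed algebra.
  set φ := toEuclideanCLM (n := Fin n) (𝕜 := ℝ)
  have hQ : ∀ t ∈ Icc 0 T, HasDerivAt (fun t => φ (P t))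
      (-(φ Aζᵀ * φ (P t) + φ (P t) * φ Aζ + φ (Cᵀ * C))) t := fun t ht => by
    convert hasDerivAt_toEuclideanCLM (hP t ht) using 1
    simp only [lyapunov_add_two_smul_eq, map_neg, map_add, map_mul, Aζ, φ]
  have hK : ‖φ Aζᵀ‖ + ‖φ Aζ‖ = 2 * sNorm Aζ := by
    rw [← sNorm, ← sNorm, sNorm_transpose, two_mul]
  have hbound : ∀ t ∈ Icc 0 T, ‖φ (P t)‖ ≤ lyapunovBound T ζ A C X := fun t ht => by
    have := norm_le_of_hasDerivAt_lyapunov hQ t ht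
    rwa [hK, hPT, sub_zero, mul_right_comm] at this
  have hlip :=
    norm_sub_le_of_hasDerivAt_lyapunov hQ hbound ⟨h0, h01.trans h1T⟩ ⟨h0.trans h01, h1T⟩
  rw [hK, Real.norm_of_nonneg (sub_nonneg.2 h01)] at hlip
  have hT : 0 ≤ T := h0.trans (h01.trans h1T)
  calc sNorm (P τ₁ - P τ₀) = ‖φ (P τ₁) - φ (P τ₀)‖ := by rw [sNorm, map_sub]
    _ ≤ (2 * sNorm Aζ * lyapunovBound T ζ A C X + sNorm (Cᵀ * C)) * (τ₁ - τ₀) := hlip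
    _ ≤ (2 * sNorm Aζ * lyapunovBound T ζ A C X + sNorm (Cᵀ * C)) * μ := by
        refine mul_le_mul_of_nonneg_left hτμ.le (add_nonneg ?_ (sNorm_nonneg _))
        exact mul_nonneg (mul_nonneg zero_le_two (sNorm_nonneg _))
          (lyapunovBound_nonneg ζ A C X hT)
    _ ≤ vartheta T ζ A C X μ := mul_le_vartheta A C X hT (by linarith)
    _ < ε := hϑ

/-- Lemma 2 of the paper: uniform continuity bound for solutions of the backward
Lyapunov ODE. -/
theorem stmt2 {n p : ℕ} (hn : 1 ≤ n) (hp : 1 ≤ p) (T ζ : ℝ) (hT : 0 < T) (hζ : 0 < ζ)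
    (A : Matrix (Fin n) (Fin n) ℝ) (C : Matrix (Fin p) (Fin n) ℝ)
    (X : Matrix (Fin n) (Fin n) ℝ) (hX : X.PosDef)
    (P : ℝ → Matrix (Fin n) (Fin n) ℝ)
    (hP : ∀ t ∈ Set.Icc (0:ℝ) T,
        HasDerivAt P (-(Aᵀ * P t + P t * A + Cᵀ * C + (2 * ζ) • P t)) t)
    (hPT : P T = X)
    (ε μ : ℝ) (hε : 0 < ε) (hμ : 0 < μ) (hϑ : vartheta T ζ A C X μ < ε) :
    ∀ τ₀ τ₁ : ℝ, 0 ≤ τ₀ → τ₀ ≤ τ₁ → τ₁ ≤ T → τ₁ - τ₀ < μ →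
      sNorm (P τ₁ - P τ₀) < ε :=
  stmt2_general T ζ A C X P hP hPT ε μ hϑ
end
end

section
/- If V'(t) + 2α·V(t) + g(t) ≤ 0 for every t ∈ (0,∞) \ 𝔇, then for all t ≥ 0: e^{2αt}·V(t) + ∫₀ᵗ e^{2αs}·g(s) ds ≤ V(0). -/
/-!
Multiplying by the integrating factor `e^{2αt}`, the inequality says that
`W t = e^{2αt} V t + ∫₀ᵗ e^{2αs} g s ds` has `W' ≤ 0` off `𝔇`. Between consecutive points of
`𝔇` the mean value theorem makes `W` nonincreasing, and at a point of `𝔇` the downward jump of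
`V` makes `W` jump downwards too, so `W` is nonincreasing on `[0, ∞)`; in particular
`W t ≤ W 0 = V 0`.
-/

open Set Filter Topology

def HasDownwardJumpAt (f : ℝ → ℝ) (x : ℝ) : Prop :=
  ∃ l, Tendsto f (𝓝[<] x) (𝓝 l) ∧ f x ≤ l

theorem le_of_deriv_nonpos_of_continuousWithinAt_Ici {W : ℝ → ℝ} {a b : ℝ} (hab : a ≤ b)
    (hrc : ContinuousWithinAt W (Ici a) a) (hdiff : ∀ x ∈ Ioc a b, DifferentiableAt ℝ W x)
    (hderiv : ∀ x ∈ Ioo a b, deriv W x ≤ 0) : W b ≤ W a := by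
  have hcont : ContinuousOn W (Icc a b) := by
    intro x hx
    rcases eq_or_lt_of_le hx.1 with rfl | hax
    · exact hrc.mono Icc_subset_Ici_self
    · exact (hdiff x ⟨hax, hx.2⟩).continuousAt.continuousWithinAt
  rw [← interior_Icc] at hderiv
  refine antitoneOn_of_deriv_nonpos (convex_Icc a b) hcont (fun x hx => ?_) hderiv
    ⟨le_rfl, hab⟩ ⟨hab, le_rfl⟩ hab
  rw [interior_Icc] at hx
  exact (hdiff x (Ioo_subset_Ioc_self hx)).differentiableWithinAt

theorem le_of_deriv_nonpos_of_hasDownwardJumpAt {W : ℝ → ℝ} {D : Set ℝ} {a b : ℝ}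
    (hD : ∀ b, (D ∩ Ioc a b).Finite)
    (hrc : ∀ x ∈ Ici a, ContinuousWithinAt W (Ici x) x)
    (hdiff : ∀ x ∈ Ioi a \ D, DifferentiableAt ℝ W x)
    (hderiv : ∀ x ∈ Ioi a \ D, deriv W x ≤ 0)
    (hjump : ∀ d ∈ D ∩ Ioi a, HasDownwardJumpAt W d) (hab : a ≤ b) : W b ≤ W a := by
  have hsegment : ∀ x y, a ≤ x → x ≤ y → (∀ z ∈ Ioc x y, z ∉ D) → W y ≤ W x :=
    fun x y hax hxy hfree =>
      le_of_deriv_nonpos_of_continuousWithinAt_Ici hxy (hrc x hax)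
        (fun z hz => hdiff z ⟨hax.trans_lt hz.1, hfree z hz⟩)
        (fun z hz => hderiv z ⟨hax.trans_lt hz.1, hfree z (Ioo_subset_Ioc_self hz)⟩)
  classical
  -- Peel off the largest jump `m ∈ (a, b]`: `W` is jump-free on `(m, b]`, and
  -- `W m ≤ lim_{x → m⁻} W x ≤ W a` by the induction hypothesis on `[a, m)`.
  suffices ∀ s : Finset ℝ, ∀ b, a ≤ b → D ∩ Ioc a b ⊆ s → W b ≤ W a from
    this _ b hab (hD b).coe_toFinset.superset
  intro s
  induction s using Finset.induction_on_max with
  | empty =>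
    exact fun b hab hs => hsegment a b le_rfl hab fun z hz hzD => by simpa using hs ⟨hzD, hz⟩
  | insert m s hlt ih =>
    intro b hab hs
    have hs' : ∀ z ∈ D ∩ Ioc a b, z ≠ m → z ∈ s := fun z hz hzm => by
      simpa [hzm] using hs hz
    by_cases hm : m ∈ D ∩ Ioc a b
    · obtain ⟨l, hl, hml⟩ := hjump m ⟨hm.1, hm.2.1⟩
      have hbm : W b ≤ W m := hsegment m b hm.2.1.le hm.2.2 fun z hz hzD =>
        (hz.1.trans (hlt z (hs' z ⟨hzD, hm.2.1.trans hz.1, hz.2⟩ hz.1.ne'))).false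
      have hleft : ∀ x ∈ Ico a m, W x ≤ W a := fun x hx => ih x hx.1 fun z hz =>
        hs' z ⟨hz.1, hz.2.1, hz.2.2.trans (hx.2.le.trans hm.2.2)⟩ (hz.2.2.trans_lt hx.2).ne
      have hla : l ≤ W a :=
        le_of_tendsto hl (eventually_of_mem (Ico_mem_nhdsLT_of_mem ⟨hm.2.1, le_rfl⟩) hleft)
      linarith
    · exact ih b hab fun z hz => hs' z hz fun hzm => hm (hzm ▸ hz)

section Primitive

variable {f : ℝ → ℝ} {a : ℝ}

theorem continuousOn_primitive_Ici (hf : ContinuousOn f (Ici a)) :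
    ContinuousOn (fun t => ∫ s in a..t, f s) (Ici a) := by
  intro x hx
  have hax : a ≤ x + 1 := by linarith [mem_Ici.mp hx]
  have hint : IntervalIntegrable f MeasureTheory.volume (min a a) (max a (x + 1)) := by
    rw [min_self, max_eq_right hax]
    exact (hf.mono (uIcc_of_le hax ▸ Icc_subset_Ici_self)).intervalIntegrable
  refine (intervalIntegral.continuousWithinAt_primitive (MeasureTheory.measure_singleton x)
    hint).mono_of_mem_nhdsWithin ?_
  exact mem_nhdsWithin.mpr ⟨Iio (x + 1), isOpen_Iio, lt_add_one x, fun y hy => ⟨hy.2, hy.1.le⟩⟩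

theorem hasDerivAt_primitive_of_continuousOn_Ici (hf : ContinuousOn f (Ici a)) {x : ℝ}
    (hx : a < x) : HasDerivAt (fun t => ∫ s in a..t, f s) (f x) x :=
  intervalIntegral.integral_hasDerivAt_right
    (hf.mono (uIcc_of_le hx.le ▸ Icc_subset_Ici_self)).intervalIntegrable
    ((hf.mono Ioi_subset_Ici_self).stronglyMeasurableAtFilter isOpen_Ioi x hx)
    (hf.continuousAt (Ici_mem_nhds hx))

end Primitive

noncomputable def expWeightedEnergy (c : ℝ) (V g : ℝ → ℝ) (t : ℝ) : ℝ :=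
  Real.exp (c * t) * V t + ∫ s in (0 : ℝ)..t, Real.exp (c * s) * g s

section ExpWeightedEnergy

variable {c : ℝ} {V g : ℝ → ℝ}

theorem continuousOn_exp_mul_Ici (hg : ContinuousOn g (Ici 0)) :
    ContinuousOn (fun s => Real.exp (c * s) * g s) (Ici 0) :=
  (by fun_prop : Continuous fun s => Real.exp (c * s)).continuousOn.mul hg

theorem continuousWithinAt_expWeightedEnergy (hg : ContinuousOn g (Ici 0)) {x : ℝ} (hx : 0 ≤ x)
    (hV : ContinuousWithinAt V (Ici x) x) :
    ContinuousWithinAt (expWeightedEnergy c V g) (Ici x) x :=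
  ((by fun_prop : Continuous fun s => Real.exp (c * s)).continuousWithinAt.mul hV).add
    ((continuousOn_primitive_Ici (continuousOn_exp_mul_Ici hg) x hx).mono (Ici_subset_Ici.mpr hx))

theorem hasDerivAt_expWeightedEnergy (hg : ContinuousOn g (Ici 0)) {x V' : ℝ} (hx : 0 < x)
    (hV : HasDerivAt V V' x) :
    HasDerivAt (expWeightedEnergy c V g) (Real.exp (c * x) * (V' + c * V x + g x)) x := by
  have hexp : HasDerivAt (fun t => Real.exp (c * t)) (Real.exp (c * x) * c) x := by
    simpa using ((hasDerivAt_id x).const_mul c).exp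
  exact ((hexp.mul hV).add (hasDerivAt_primitive_of_continuousOn_Ici
    (continuousOn_exp_mul_Ici (c := c) hg) hx)).congr_deriv (by ring)

theorem HasDownwardJumpAt.expWeightedEnergy (hg : ContinuousOn g (Ici 0)) {d : ℝ} (hd : 0 < d)
    (hV : HasDownwardJumpAt V d) : HasDownwardJumpAt (expWeightedEnergy c V g) d := by
  obtain ⟨l, hl, hVl⟩ := hV
  have hprim := (hasDerivAt_primitive_of_continuousOn_Ici (continuousOn_exp_mul_Ici (c := c) hg)
    hd).continuousAt
  refine ⟨Real.exp (c * d) * l + ∫ s in (0 : ℝ)..d, Real.exp (c * s) * g s, ?_, ?_⟩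
  · exact ((by fun_prop : Continuous fun s => Real.exp (c * s)).continuousAt.tendsto.mono_left
      nhdsWithin_le_nhds |>.mul hl).add (hprim.tendsto.mono_left nhdsWithin_le_nhds)
  · exact add_le_add_left (mul_le_mul_of_nonneg_left hVl (Real.exp_pos _).le) _

end ExpWeightedEnergy

theorem stmt12_general (α : ℝ) (D : Set ℝ)
    (hDfin : ∀ K : Set ℝ, Bornology.IsBounded K → (D ∩ K).Finite)
    (g V : ℝ → ℝ)
    (hg : ContinuousOn g (Set.Ici 0))
    (hVrc : ∀ t ∈ Set.Ici (0:ℝ), ContinuousWithinAt V (Set.Ici t) t)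
    (hVdiff : ∀ t ∈ Set.Ioi (0:ℝ) \ D, DifferentiableAt ℝ V t)
    (hjump : ∀ d ∈ D, ∃ l : ℝ,
      Filter.Tendsto V (nhdsWithin d (Set.Iio d)) (nhds l) ∧ V d ≤ l)
    (hineq : ∀ t ∈ Set.Ioi (0:ℝ) \ D, deriv V t + 2 * α * V t + g t ≤ 0) :
    ∀ t ≥ (0:ℝ),
      Real.exp (2 * α * t) * V t + (∫ s in (0:ℝ)..t, Real.exp (2 * α * s) * g s)
        ≤ V 0 := by
  intro t ht
  have hderiv : ∀ x ∈ Ioi 0 \ D, HasDerivAt (expWeightedEnergy (2 * α) V g)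
      (Real.exp (2 * α * x) * (deriv V x + 2 * α * V x + g x)) x :=
    fun x hx => hasDerivAt_expWeightedEnergy hg hx.1 (hVdiff x hx).hasDerivAt
  have hmono := le_of_deriv_nonpos_of_hasDownwardJumpAt (W := expWeightedEnergy (2 * α) V g)
    (fun b => hDfin _ (Metric.isBounded_Ioc 0 b))
    (fun x hx => continuousWithinAt_expWeightedEnergy hg hx (hVrc x hx))
    (fun x hx => (hderiv x hx).differentiableAt)
    (fun x hx => (hderiv x hx).deriv ▸
      mul_nonpos_of_nonneg_of_nonpos (Real.exp_pos _).le (hineq x hx))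
    (fun d hd => HasDownwardJumpAt.expWeightedEnergy hg hd.2 (hjump d hd.1)) ht
  simpa [expWeightedEnergy] using hmono

/-- The comparison/integration argument (eq. (23) in the proof of Theorem 1):
a nonnegative function with downward jumps on a locally finite set 𝔇, satisfying
V' + 2αV + g ≤ 0 off 𝔇, obeys the integrated dissipation inequality. -/
theorem stmt12 (α : ℝ) (hα : 0 < α) (D : Set ℝ) (hDsub : D ⊆ Set.Ioi 0)
    (hDfin : ∀ K : Set ℝ, Bornology.IsBounded K → (D ∩ K).Finite)
    (g V : ℝ → ℝ)
    (hg : ContinuousOn g (Set.Ici 0)) (hg0 : ∀ t ∈ Set.Ici (0:ℝ), 0 ≤ g t)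
    (hV0 : ∀ t ∈ Set.Ici (0:ℝ), 0 ≤ V t)
    (hVrc : ∀ t ∈ Set.Ici (0:ℝ), ContinuousWithinAt V (Set.Ici t) t)
    (hVdiff : ∀ t ∈ Set.Ioi (0:ℝ) \ D, DifferentiableAt ℝ V t)
    (hjump : ∀ d ∈ D, ∃ l : ℝ,
      Filter.Tendsto V (nhdsWithin d (Set.Iio d)) (nhds l) ∧ V d ≤ l)
    (hineq : ∀ t ∈ Set.Ioi (0:ℝ) \ D, deriv V t + 2 * α * V t + g t ≤ 0) :
    ∀ t ≥ (0:ℝ),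
      Real.exp (2 * α * t) * V t + (∫ s in (0:ℝ)..t, Real.exp (2 * α * s) * g s)
        ≤ V 0 :=
  stmt12_general α D hDfin g V hg hVrc hVdiff hjump hineq
end

section
/- If V'(t) + 2α·V(t) ≤ c for every t ∈ (0,∞) \ 𝔇, then for all t ≥ 0: V(t) ≤ e^{−2αt}·V(0) + (c/(2α))·(1 − e^{−2αt}); in particular V(t) ≤ e^{−2αt}·V(0) + c/(2α). -/
/-!
With the integrating factor `e^{2αt}`, the function `W t = e^{2αt} (V t - c/(2α))` satisfies
`W' = e^{2αt} (V' + 2αV - c) ≤ 0` off `𝔇` and, like `V`, only jumps down. By the mean value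
theorem `W` is nonincreasing between consecutive jump points, and at a jump point its value is at
most its left limit. As only finitely many jump points lie in `(0, t)`, `W t ≤ W 0`, which
rearranges to the bound.
-/

open Set Filter Topology

section DownwardJumps

variable {W : ℝ → ℝ} {D : Set ℝ} {a b : ℝ}

theorem le_of_deriv_nonpos_of_le_tendsto_nhdsLT {l : ℝ} (hab : a < b)
    (ha : ContinuousWithinAt W (Ici a) a)
    (hdiff : ∀ x ∈ Ioo a b, DifferentiableAt ℝ W x)
    (hderiv : ∀ x ∈ Ioo a b, deriv W x ≤ 0)
    (hl : Tendsto W (𝓝[<] b) (𝓝 l)) (hb : W b ≤ l) : W b ≤ W a := by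
  have hcont : ContinuousOn W (Ico a b) := by
    intro x hx
    rcases hx.1.eq_or_lt with rfl | hax
    · exact ha.mono Ico_subset_Ici_self
    · exact (hdiff x ⟨hax, hx.2⟩).continuousAt.continuousWithinAt
  have hanti : AntitoneOn W (Ico a b) :=
    antitoneOn_of_deriv_nonpos (convex_Ico a b) hcont
      (by rw [interior_Ico]; exact fun x hx => (hdiff x hx).differentiableWithinAt)
      (by rw [interior_Ico]; exact hderiv)
  have hlim : l ≤ W a := by
    refine le_of_tendsto hl ?_
    filter_upwards [Ioo_mem_nhdsLT hab] with x hx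
    exact hanti (left_mem_Ico.2 hab) (Ioo_subset_Ico_self hx) hx.1.le
  exact hb.trans hlim

theorem le_of_deriv_nonpos_of_downward_jumps
    (hfin : ∀ b, (D ∩ Ioo a b).Finite)
    (hrc : ∀ t ∈ Ici a, ContinuousWithinAt W (Ici t) t)
    (hdiff : ∀ t ∈ Ioi a \ D, DifferentiableAt ℝ W t)
    (hderiv : ∀ t ∈ Ioi a \ D, deriv W t ≤ 0)
    (hjump : ∀ t ∈ Ioi a, ∃ l, Tendsto W (𝓝[<] t) (𝓝 l) ∧ W t ≤ l)
    (hab : a ≤ b) : W b ≤ W a := by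
  have segment : ∀ c d, a ≤ c → c < d → (∀ x ∈ Ioo c d, x ∉ D) → W d ≤ W c := by
    intro c d hac hcd hD
    obtain ⟨l, hl, hdl⟩ := hjump d (hac.trans_lt hcd)
    exact le_of_deriv_nonpos_of_le_tendsto_nhdsLT hcd (hrc c hac)
      (fun x hx => hdiff x ⟨hac.trans_lt hx.1, hD x hx⟩)
      (fun x hx => hderiv x ⟨hac.trans_lt hx.1, hD x hx⟩) hl hdl
  classical
  suffices h : ∀ s : Finset ℝ, ∀ b, a ≤ b → D ∩ Ioo a b = s → W b ≤ W a from
    h _ b hab (hfin b).coe_toFinset.symm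
  intro s
  induction s using Finset.induction_on_max with
  | empty =>
    intro b hab hs
    rcases hab.eq_or_lt with rfl | hab
    · exact le_rfl
    · exact segment a b le_rfl hab fun x hx hxD => by simpa using hs.subset ⟨hxD, hx⟩
  | insert d s hlt ih =>
    intro b hab hs
    have hd : d ∈ D ∩ Ioo a b := by simp [hs]
    have hsd : D ∩ Ioo a d = s := by
      ext x
      constructor
      · rintro ⟨hxD, hax, hxd⟩
        have : x ∈ (insert d s : Finset ℝ) := by
          rw [← Finset.mem_coe, ← hs]; exact ⟨hxD, hax, hxd.trans hd.2.2⟩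
        exact (Finset.mem_insert.1 this).resolve_left hxd.ne
      · intro hx
        have : x ∈ D ∩ Ioo a b := by rw [hs]; simp [hx]
        exact ⟨this.1, this.2.1, hlt x hx⟩
    have hdb : ∀ x ∈ Ioo d b, x ∉ D := by
      intro x hx hxD
      have : x ∈ (insert d s : Finset ℝ) := by
        rw [← Finset.mem_coe, ← hs]; exact ⟨hxD, hd.2.1.trans hx.1, hx.2⟩
      rcases Finset.mem_insert.1 this with rfl | hxs
      · exact lt_irrefl _ hx.1
      · exact lt_asymm hx.1 (hlt x hxs)
    calc W b ≤ W d := segment d b hd.2.1.le hd.2.2 hdb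
      _ ≤ W a := ih d hd.2.1.le hsd

end DownwardJumps

section IntegratingFactor

open Real

variable {V : ℝ → ℝ} {k m t : ℝ}

theorem HasDerivAt.exp_mul_mul_sub {v : ℝ} (hV : HasDerivAt V v t) :
    HasDerivAt (fun s => Real.exp (k * s) * (V s - m))
      (Real.exp (k * t) * (v + k * (V t - m))) t := by
  have hexp : HasDerivAt (fun s => Real.exp (k * s)) (Real.exp (k * t) * k) t := by
    simpa using ((hasDerivAt_id t).const_mul k).exp
  exact (hexp.mul (hV.sub_const m)).congr_deriv (by ring)

theorem Filter.Tendsto.exp_mul_mul_sub {l : Filter ℝ} {y : ℝ} (hV : Tendsto V l (𝓝 y))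
    (hl : l ≤ 𝓝 t) :
    Tendsto (fun s => Real.exp (k * s) * (V s - m)) l (𝓝 (Real.exp (k * t) * (y - m))) :=
  (((continuous_exp.comp (continuous_const_mul k)).tendsto t).mono_left hl).mul
    (hV.sub_const m)

theorem deriv_exp_mul_mul_sub_div_nonpos {c : ℝ} (hk : k ≠ 0) (hV : DifferentiableAt ℝ V t)
    (h : deriv V t + k * V t ≤ c) :
    deriv (fun s => exp (k * s) * (V s - c / k)) t ≤ 0 := by
  rw [hV.hasDerivAt.exp_mul_mul_sub.deriv]
  refine mul_nonpos_of_nonneg_of_nonpos (exp_pos _).le ?_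
  rw [mul_sub, mul_div_cancel₀ c hk]
  linarith

theorem exists_tendsto_nhdsLT_ge_exp_mul_mul_sub
    (h : ∃ l, Tendsto V (𝓝[<] t) (𝓝 l) ∧ V t ≤ l) :
    ∃ l, Tendsto (fun s => exp (k * s) * (V s - m)) (𝓝[<] t) (𝓝 l) ∧
      exp (k * t) * (V t - m) ≤ l := by
  obtain ⟨l, hl, hVl⟩ := h
  exact ⟨_, hl.exp_mul_mul_sub nhdsWithin_le_nhds, by gcongr⟩

theorem le_exp_neg_mul_add_of_exp_mul_mul_sub_le {x y : ℝ}
    (h : exp (k * t) * (x - m) ≤ y - m) :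
    x ≤ exp (-(k * t)) * y + m * (1 - exp (-(k * t))) := by
  rw [exp_neg]
  field_simp
  linarith

end IntegratingFactor

theorem stmt13_general (α c : ℝ) (hα : 0 < α) (hc : 0 ≤ c) (D : Set ℝ)
    (hDfin : ∀ K : Set ℝ, Bornology.IsBounded K → (D ∩ K).Finite)
    (V : ℝ → ℝ)
    (hVrc : ∀ t ∈ Set.Ici (0:ℝ), ContinuousWithinAt V (Set.Ici t) t)
    (hVdiff : ∀ t ∈ Set.Ioi (0:ℝ) \ D, DifferentiableAt ℝ V t)
    (hjump : ∀ d ∈ D, ∃ l : ℝ,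
      Filter.Tendsto V (nhdsWithin d (Set.Iio d)) (nhds l) ∧ V d ≤ l)
    (hineq : ∀ t ∈ Set.Ioi (0:ℝ) \ D, deriv V t + 2 * α * V t ≤ c) :
    ∀ t ≥ (0:ℝ),
      V t ≤ Real.exp (-(2 * α * t)) * V 0 +
          (c / (2 * α)) * (1 - Real.exp (-(2 * α * t)))
      ∧ V t ≤ Real.exp (-(2 * α * t)) * V 0 + c / (2 * α) := by
  intro t ht
  have hV_le_lim : ∀ s ∈ Ioi (0:ℝ), ∃ l, Tendsto V (𝓝[<] s) (𝓝 l) ∧ V s ≤ l := by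
    intro s hs
    by_cases hsD : s ∈ D
    · exact hjump s hsD
    · exact ⟨V s, (hVdiff s ⟨hs, hsD⟩).continuousAt.tendsto.mono_left nhdsWithin_le_nhds,
        le_rfl⟩
  have hW : Real.exp (2 * α * t) * (V t - c / (2 * α)) ≤
      Real.exp (2 * α * 0) * (V 0 - c / (2 * α)) :=
    le_of_deriv_nonpos_of_downward_jumps (D := D)
      (fun b => hDfin _ (Metric.isBounded_Ioo 0 b))
      (fun s hs => (hVrc s hs).tendsto.exp_mul_mul_sub nhdsWithin_le_nhds)
      (fun s hs => (hVdiff s hs).hasDerivAt.exp_mul_mul_sub.differentiableAt)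
      (fun s hs => deriv_exp_mul_mul_sub_div_nonpos (by positivity) (hVdiff s hs) (hineq s hs))
      (fun s hs => exists_tendsto_nhdsLT_ge_exp_mul_mul_sub (hV_le_lim s hs)) ht
  rw [mul_zero, Real.exp_zero, one_mul] at hW
  have hbound := le_exp_neg_mul_add_of_exp_mul_mul_sub_le hW
  refine ⟨hbound, hbound.trans ?_⟩
  gcongr
  exact mul_le_of_le_one_right (by positivity) (by linarith [Real.exp_pos (-(2 * α * t))])

/-- The ultimate-boundedness comparison argument (eq. (24) in the paper):
a nonnegative function with downward jumps on a locally finite set 𝔇, satisfying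
V' + 2αV ≤ c off 𝔇, decays exponentially up to the offset c/(2α). -/
theorem stmt13 (α c : ℝ) (hα : 0 < α) (hc : 0 ≤ c) (D : Set ℝ) (hDsub : D ⊆ Set.Ioi 0)
    (hDfin : ∀ K : Set ℝ, Bornology.IsBounded K → (D ∩ K).Finite)
    (V : ℝ → ℝ)
    (hV0 : ∀ t ∈ Set.Ici (0:ℝ), 0 ≤ V t)
    (hVrc : ∀ t ∈ Set.Ici (0:ℝ), ContinuousWithinAt V (Set.Ici t) t)
    (hVdiff : ∀ t ∈ Set.Ioi (0:ℝ) \ D, DifferentiableAt ℝ V t)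
    (hjump : ∀ d ∈ D, ∃ l : ℝ,
      Filter.Tendsto V (nhdsWithin d (Set.Iio d)) (nhds l) ∧ V d ≤ l)
    (hineq : ∀ t ∈ Set.Ioi (0:ℝ) \ D, deriv V t + 2 * α * V t ≤ c) :
    ∀ t ≥ (0:ℝ),
      V t ≤ Real.exp (-(2 * α * t)) * V 0 +
          (c / (2 * α)) * (1 - Real.exp (-(2 * α * t)))
      ∧ V t ≤ Real.exp (-(2 * α * t)) * V 0 + c / (2 * α) :=
  stmt13_general α c hα hc D hDfin V hVrc hVdiff hjump hineq
end
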